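/- Let π ∈ S_n with n ≥ 2. Suppose that in the one-line notation of π the values 1 and n occur in adjacent positions (|π⁻¹(1) − π⁻¹(n)| = 1), with π(1) ≠ n and π(n) ≠ 1. Then the domination number of G_π is 2 and {1, n} is a minimum dominating set of G_π. -/

import Mathlib

/-- The permutation graph of `π`: vertices `0,…,n-1` (0-indexed version of `1,…,n`),
with `i < j` adjacent iff `π⁻¹ i > π⁻¹ j`. -/
def permGraph {n : ℕ} (π : Equiv.Perm (Fin n)) : SimpleGraph (Fin n) where
  Adj i j := (i < j ∧ π.symm j < π.symm i) ∨ (j < i ∧ π.symm i < π.symm j)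
  symm := ⟨by intro i j h; tauto⟩
  loopless := ⟨by intro i h; rcases h with ⟨h, _⟩ | ⟨h, _⟩ <;> exact lt_irrefl i h⟩

/-- `D` dominates `G`: every vertex is in `D` or adjacent to an element of `D`. -/
def Dominates {V : Type*} (G : SimpleGraph V) (D : Set V) : Prop :=
  ∀ v, v ∈ D ∨ ∃ d ∈ D, G.Adj v d

/-- The domination number: minimum cardinality of a dominating set. -/
noncomputable def domNumber {V : Type*} [Fintype V] (G : SimpleGraph V) : ℕ :=
  sInf {k | ∃ D : Finset V, D.card = k ∧ Dominates G ↑D}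

/-- Closed neighborhood `N[x]`. -/
def closedNbhd {V : Type*} (G : SimpleGraph V) (x : V) : Set V :=
  {y | y = x ∨ G.Adj x y}

/-- Degree of a vertex. -/
noncomputable def deg {V : Type*} (G : SimpleGraph V) (v : V) : ℕ :=
  (G.neighborSet v).ncard

/-!
In the one-line notation of `π`, a vertex is adjacent to the minimum `1` iff it stands to the
left of `1`, and to the maximum `n` iff it stands to the right of `n`. When `1` and `n` occupy
neighbouring positions, every other entry stands to the left of both or to the right of both,
so `{1, n}` dominates. A single vertex `d` cannot dominate: `d = 1` would force `1` to be the
last entry, `d = n` would force `n` to be the first one, and any other `d` would have to stand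
strictly between `n` and `1`.
-/

lemma Fin.covBy_or_covBy_of_natAbs_sub_eq_one {n : ℕ} {a b : Fin n}
    (h : ((a : ℤ) - (b : ℤ)).natAbs = 1) : a ⋖ b ∨ b ⋖ a := by
  simp only [Fin.covBy_iff, Nat.covBy_iff_add_one_eq]
  omega

section Domination

variable {V : Type*}

lemma dominates_singleton_iff {G : SimpleGraph V} {d : V} :
    Dominates G {d} ↔ ∀ v, v ≠ d → G.Adj v d := by
  simp only [Dominates, Set.mem_singleton_iff, exists_eq_left, or_iff_not_imp_left]

lemma domNumber_le_card [Fintype V] {G : SimpleGraph V} {D : Finset V} (hD : Dominates G D) :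
    domNumber G ≤ D.card :=
  Nat.sInf_le ⟨D, rfl, hD⟩

lemma two_le_domNumber [Fintype V] [Nonempty V] {G : SimpleGraph V}
    (h : ∀ d, ¬ Dominates G {d}) : 2 ≤ domNumber G := by
  refine le_csInf ⟨_, Finset.univ, rfl, fun v => Or.inl (Finset.mem_univ v)⟩ ?_
  rintro k ⟨D, rfl, hD⟩
  by_contra! hk
  interval_cases hcard : D.card
  · obtain ⟨v⟩ := ‹Nonempty V›
    simpa [Finset.card_eq_zero.mp hcard, Dominates] using hD v
  · obtain ⟨d, rfl⟩ := Finset.card_eq_one.mp hcard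
    exact h d (by simpa using hD)

lemma domNumber_eq_two [Fintype V] {G : SimpleGraph V} {a b : V} (hab : a ≠ b)
    (hD : Dominates G {a, b}) (h : ∀ d, ¬ Dominates G {d}) : domNumber G = 2 := by
  classical
  have : Nonempty V := ⟨a⟩
  refine le_antisymm ?_ (two_le_domNumber h)
  simpa [Finset.card_pair hab] using domNumber_le_card (D := {a, b}) (by simpa using hD)

end Domination

namespace permGraph

variable {n : ℕ} {π : Equiv.Perm (Fin n)} {i j v : Fin n}

lemma adj_iff_of_isBot (hi : IsBot i) : (permGraph π).Adj v i ↔ π.symm v < π.symm i := by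
  refine ⟨?_, fun h => Or.inr ⟨lt_of_le_of_ne (hi v) ?_, h⟩⟩
  · rintro (⟨hvi, -⟩ | ⟨-, h⟩)
    · exact absurd (hi v) (not_le.mpr hvi)
    · exact h
  · rintro rfl
    exact h.false

lemma adj_iff_of_isTop (hj : IsTop j) : (permGraph π).Adj v j ↔ π.symm j < π.symm v := by
  refine ⟨?_, fun h => Or.inl ⟨lt_of_le_of_ne (hj v) ?_, h⟩⟩
  · rintro (⟨-, h⟩ | ⟨hjv, -⟩)
    · exact h
    · exact absurd (hj v) (not_le.mpr hjv)
  · rintro rfl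
    exact h.false

lemma dominates_pair_of_covBy (hi : IsBot i) (hj : IsTop j)
    (hcov : π.symm i ⋖ π.symm j ∨ π.symm j ⋖ π.symm i) : Dominates (permGraph π) {i, j} := by
  intro v
  by_cases hvi : v = i
  · exact Or.inl (Or.inl hvi)
  by_cases hvj : v = j
  · exact Or.inl (Or.inr hvj)
  refine Or.inr ?_
  rcases (π.symm.injective.ne hvi).lt_or_gt with hlt | hgt
  · exact ⟨i, Or.inl rfl, (adj_iff_of_isBot hi).mpr hlt⟩
  · refine ⟨j, Or.inr rfl, (adj_iff_of_isTop hj).mpr ?_⟩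
    rcases hcov with hij | hji
    · exact (hij.ge_of_gt hgt).lt_of_ne (π.symm.injective.ne hvj).symm
    · exact hji.lt.trans hgt

lemma not_dominates_singleton (hi : IsBot i) (hj : IsTop j)
    (hcov : π.symm i ⋖ π.symm j ∨ π.symm j ⋖ π.symm i) (hfirst : π i ≠ j) (hlast : π j ≠ i)
    (d : Fin n) : ¬ Dominates (permGraph π) {d} := by
  rw [dominates_singleton_iff]
  intro hd
  by_cases hdi : d = i
  · subst hdi
    have h := (adj_iff_of_isBot hi).mp (hd (π j) hlast)
    rw [Equiv.symm_apply_apply] at h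
    exact (hj _).not_gt h
  by_cases hdj : d = j
  · subst hdj
    have h := (adj_iff_of_isTop hj).mp (hd (π i) hfirst)
    rw [Equiv.symm_apply_apply] at h
    exact (hi _).not_gt h
  have hd_left := (adj_iff_of_isBot hi).mp (hd i (Ne.symm hdi)).symm
  have hd_right := (adj_iff_of_isTop hj).mp (hd j (Ne.symm hdj)).symm
  rcases hcov with hij | hji
  · exact hij.lt.not_gt (hd_right.trans hd_left)
  · exact hji.2 hd_right hd_left

end permGraph

theorem one_adjacent_to_n_dominating {n : ℕ} (hn : 2 ≤ n) (π : Equiv.Perm (Fin n))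
    (hpos : ((π.symm ⟨0, by omega⟩ : ℤ) - (π.symm ⟨n - 1, by omega⟩ : ℤ)).natAbs = 1)
    (h1 : π ⟨0, by omega⟩ ≠ ⟨n - 1, by omega⟩)
    (h2 : π ⟨n - 1, by omega⟩ ≠ ⟨0, by omega⟩) :
    domNumber (permGraph π) = 2 ∧
      Dominates (permGraph π) {(⟨0, by omega⟩ : Fin n), ⟨n - 1, by omega⟩} := by
  have hbot : IsBot (⟨0, by omega⟩ : Fin n) := fun _ => Fin.mk_le_mk.mpr (Nat.zero_le _)
  have htop : IsTop (⟨n - 1, by omega⟩ : Fin n) := fun _ => Fin.mk_le_mk.mpr (by omega)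
  have hne : (⟨0, by omega⟩ : Fin n) ≠ ⟨n - 1, by omega⟩ := by rw [Ne, Fin.mk.injEq]; omega
  have hcov := Fin.covBy_or_covBy_of_natAbs_sub_eq_one hpos
  have hD := permGraph.dominates_pair_of_covBy hbot htop hcov
  exact ⟨domNumber_eq_two hne hD (permGraph.not_dominates_singleton hbot htop hcov h1 h2), hD⟩
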